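/- arXiv:1406.4279 — 9 statements merged into one kernel-verified Lean document; each statement's English description precedes it below -/
import Mathlib

section
/- Define, for a positive integer h, the set D̄((12h)^2) = ⋃_{j=0}^{3h} { (12h - 4j - 3y, 3j, 2y) : 0 ≤ y ≤ r̄(h, j) }, where r̄(h, j) = 4h - (4j)/3 if j ≡ 0 (mod 3), r̄(h, j) = 4h - 2 - 4(j-1)/3 if j ≡ 1 (mod 3), and r̄(h, j) = 4h - 3 - 4(j-2)/3 if j ≡ 2 (mod 3). Then for every h ≥ 1, the h-fold sumset h * D̄(12^2) (the set of all sums of h elements of D̄(12^2), with repetition) equals D̄((12h)^2). -/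
open Pointwise

/-- The function `r̄(k, j)` from Table 2 of the paper. -/
def rbar (k j : ℕ) : ℕ :=
  if j % 3 = 0 then 4 * k - 4 * j / 3
  else if j % 3 = 1 then 4 * k - 2 - 4 * (j - 1) / 3
  else 4 * k - 3 - 4 * (j - 2) / 3

/-- `D̄_j((12h)²) = { (12h - 4j - 3y, 3j, 2y) : 0 ≤ y ≤ r̄(h, j) }`. -/
def DbarJ (h j : ℕ) : Set (ℕ × ℕ × ℕ) :=
  { p | ∃ y ≤ rbar h j, p = (12 * h - 4 * j - 3 * y, 3 * j, 2 * y) }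

/-- `D̄((12h)²) = ⋃_{j=0}^{3h} D̄_j((12h)²)`. -/
def Dbar (h : ℕ) : Set (ℕ × ℕ × ℕ) :=
  ⋃ j ∈ Set.Iic (3 * h), DbarJ h j

/-- `foldSum h X` is the `h`-fold sumset `h * X`: all sums of `h` elements of `X`
(with repetition allowed); by convention `foldSum 0 X = {0}`. -/
def foldSum {α : Type*} [AddMonoid α] : ℕ → Set α → Set α
  | 0, _ => {0}
  | n + 1, X => foldSum n X + X

lemma mem_Dbar {h : ℕ} {p : ℕ × ℕ × ℕ} :
    p ∈ Dbar h ↔ ∃ j ≤ 3*h, ∃ y ≤ rbar h j, p = (12*h - 4*j - 3*y, 3*j, 2*y) := by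
  simp [Dbar, DbarJ, Set.mem_iUnion]

lemma key (h : ℕ) : Dbar h + Dbar 1 = Dbar (h+1) := by
  ext p
  rw [Set.mem_add]
  constructor
  · rintro ⟨a, ha, b, hb, rfl⟩
    rw [mem_Dbar] at ha hb
    rw [mem_Dbar]
    obtain ⟨j1, hj1, y1, hy1, rfl⟩ := ha
    obtain ⟨j2, hj2, y2, hy2, rfl⟩ := hb
    refine ⟨j1+j2, by omega, y1+y2, ?_, ?_⟩
    · simp only [rbar] at hy1 hy2 ⊢; split_ifs at hy1 hy2 ⊢ <;> omega
    · simp only [Prod.mk_add_mk, Prod.mk.injEq]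
      refine ⟨?_, by omega, by omega⟩
      simp only [rbar] at hy1 hy2; split_ifs at hy1 hy2 <;> omega
  · rw [mem_Dbar]
    rintro ⟨j, hj, y, hy, rfl⟩
    by_cases hc : j ≤ 3*h
    · refine ⟨(12*h - 4*j - 3*(y - min y 4), 3*j, 2*(y - min y 4)), ?_,
        (12 - 3*(min y 4), 0, 2*(min y 4)), ?_, ?_⟩
      · rw [mem_Dbar]
        refine ⟨j, hc, y - min y 4, ?_, by norm_num⟩
        simp only [rbar] at hy ⊢; split_ifs at hy ⊢ <;> omega
      · rw [mem_Dbar]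
        refine ⟨0, by norm_num, min y 4, ?_, by norm_num⟩
        simp only [rbar]; norm_num
      · simp only [Prod.mk_add_mk, Prod.mk.injEq]
        refine ⟨?_, by omega, by omega⟩
        simp only [rbar] at hy; split_ifs at hy <;> omega
    · refine ⟨(12*h - 4*(3*h) - 0, 3*(3*h), 0), ?_,
        (12 - 4*(j - 3*h) - 3*y, 3*(j - 3*h), 2*y), ?_, ?_⟩
      · rw [mem_Dbar]
        exact ⟨3*h, le_refl _, 0, Nat.zero_le _, by norm_num⟩
      · rw [mem_Dbar]
        refine ⟨j - 3*h, by omega, y, ?_, by norm_num⟩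
        simp only [rbar] at hy ⊢; split_ifs at hy ⊢ <;> omega
      · simp only [Prod.mk_add_mk, Prod.mk.injEq]
        refine ⟨?_, by omega, by omega⟩
        simp only [rbar] at hy; split_ifs at hy <;> omega

/-- For every `h ≥ 1`, the `h`-fold sumset `h * D̄(12²)` equals `D̄((12h)²)`.
(Here `D̄(12²) = Dbar 1`.) -/
theorem stmt5 (h : ℕ) (hh : 1 ≤ h) : foldSum h (Dbar 1) = Dbar h := by

  induction h with
  | zero => omega
  | succ n ih =>
    rcases Nat.eq_or_lt_of_le hh with h1 | h1
    · obtain rfl : n = 0 := by omega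
      show foldSum 0 (Dbar 1) + Dbar 1 = Dbar 1
      rw [foldSum, Set.singleton_zero, zero_add]
    · rw [foldSum, ih (by omega), key]
end

section
/- For each j with 0 ≤ j ≤ 3h, the componentwise sumset D̄_j((12h)^2) + D̄_0(12^2) equals D̄_j((12(h+1))^2), where D̄_j((12m)^2) = { (12m - 4j - 3y, 3j, 2y) : 0 ≤ y ≤ r̄(m, j) } and r̄(m, j) is defined by: r̄(m,j) = 4m - 4j/3 if j ≡ 0 (mod 3), 4m - 2 - 4(j-1)/3 if j ≡ 1 (mod 3), 4m - 3 - 4(j-2)/3 if j ≡ 2 (mod 3). -/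
open Pointwise

/-- For each `0 ≤ j ≤ 3h`, the componentwise sumset
`D̄_j((12h)²) + D̄_0(12²)` equals `D̄_j((12(h+1))²)`. -/
theorem stmt6 (h j : ℕ) (hh : 1 ≤ h) (hj : j ≤ 3 * h) :
    DbarJ h j + DbarJ 1 0 = DbarJ (h + 1) j := by
  ext p
  simp only [Set.mem_add, DbarJ, Set.mem_setOf_eq]
  constructor
  · rintro ⟨a, ⟨y, hy, rfl⟩, b, ⟨z, hz, rfl⟩, rfl⟩
    have hz4 : z ≤ 4 := by unfold rbar at hz; simp at hz; omega
    have h1 : 3 * y + 4 * j ≤ 12 * h := by unfold rbar at hy; split_ifs at hy <;> omega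
    refine ⟨y + z, ?_, ?_⟩
    · unfold rbar at *; split_ifs at * <;> omega
    · simp only [Prod.ext_iff, Prod.mk_add_mk]
      refine ⟨by omega, by omega, by omega⟩
  · rintro ⟨w, hw, rfl⟩
    have hrb : rbar (h + 1) j = rbar h j + 4 := by
      unfold rbar; split_ifs <;> omega
    refine ⟨(12 * h - 4 * j - 3 * (w - min w 4), 3 * j, 2 * (w - min w 4)),
      ⟨w - min w 4, by omega, rfl⟩,
      (12 - 3 * min w 4, 0, 2 * min w 4),
      ⟨min w 4, by unfold rbar; simp, rfl⟩, ?_⟩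
    have h1 : 3 * (w - min w 4) + 4 * j ≤ 12 * h := by
      unfold rbar at *; split_ifs at * <;> omega
    simp only [Prod.ext_iff, Prod.mk_add_mk]
    refine ⟨by omega, by omega, by omega⟩
end

section
/- For each i ∈ {0,1,2,3}, the componentwise sumset D̄_i(12^2) + D̄_{3h}((12h)^2) equals D̄_{i+3h}((12(h+1))^2), with D̄_j and r̄ as defined. -/
open Pointwise

lemma rbar_eq (h i : ℕ) (hh : 1 ≤ h) (hi : i ≤ 3) :
    rbar (h + 1) (i + 3 * h) = rbar 1 i := by
  unfold rbar
  interval_cases i <;> simp [Nat.add_mul_mod_self_left] <;> omega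

lemma rbar_zero (h : ℕ) : rbar h (3 * h) = 0 := by
  unfold rbar
  simp [Nat.mul_mod_right]
  omega

/-- For each `i ∈ {0,1,2,3}`, the componentwise sumset
`D̄_i(12²) + D̄_{3h}((12h)²)` equals `D̄_{i+3h}((12(h+1))²)`. -/
theorem stmt7 (h i : ℕ) (hh : 1 ≤ h) (hi : i ≤ 3) :
    DbarJ 1 i + DbarJ h (3 * h) = DbarJ (h + 1) (i + 3 * h) := by
  have hr1 : rbar 1 i ≤ 4 := by unfold rbar; interval_cases i <;> simp <;> omega
  ext ⟨a, b, c⟩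
  simp only [DbarJ, Set.mem_add, Set.mem_setOf_eq, rbar_zero, rbar_eq h i hh hi,
    Nat.le_zero, Prod.mk.injEq, Prod.exists]
  constructor
  · rintro ⟨a1, b1, c1, ⟨y, hy, h1, h2, h3⟩, a2, b2, c2, ⟨z, hz, g1, g2, g3⟩, hs⟩
    subst hz
    refine ⟨y, hy, ?_, ?_, ?_⟩ <;>
      [skip; skip; skip] <;>
      · simp only [Prod.mk_add_mk, Prod.mk.injEq] at hs
        omega
  · rintro ⟨y, hy, h1, h2, h3⟩
    refine ⟨12 * 1 - 4 * i - 3 * y, 3 * i, 2 * y, ⟨y, hy, rfl, rfl, rfl⟩,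
      12 * h - 4 * (3 * h) - 3 * 0, 3 * (3 * h), 2 * 0, ⟨0, rfl, rfl, rfl, rfl⟩, ?_⟩
    simp only [Prod.mk_add_mk, Prod.mk.injEq]
    refine ⟨?_, ?_, ?_⟩ <;> omega
end

section
/- For v ≡ 0 (mod 12), define r(v,u) = (v-3)/3 - 4u/3 if u ≡ 0 (mod 3), (v-6)/3 - 4(u-1)/3 if u ≡ 1 (mod 3), (v-9)/3 - 4(u-2)/3 if u ≡ 2 (mod 3), and D_i(v) = { (v-1-4i-3y, 3i, 2y) : 0 ≤ y ≤ r(v,i) }, D(v) = ⋃_{i=0}^{(v-4)/4} D_i(v). Then for each j with 0 ≤ j ≤ (v-12)/4, D̄_j((v-12)^2) + D_2(12) = D_{j+2}(v), where D̄_j((v-12)^2) = { ((v-12) - 4j - 3y, 3j, 2y) : 0 ≤ y ≤ r̄((v-12)/12, j) }. -/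
open Pointwise

/-- The function `r(v, u)` from Table 1 of the paper. -/
def rD (v u : ℕ) : ℕ :=
  if u % 3 = 0 then (v - 3) / 3 - 4 * u / 3
  else if u % 3 = 1 then (v - 6) / 3 - 4 * (u - 1) / 3
  else (v - 9) / 3 - 4 * (u - 2) / 3

/-- `D_i(v) = { (v - 1 - 4i - 3y, 3i, 2y) : 0 ≤ y ≤ r(v, i) }`. -/
def DJ (v i : ℕ) : Set (ℕ × ℕ × ℕ) :=
  { p | ∃ y ≤ rD v i, p = (v - 1 - 4 * i - 3 * y, 3 * i, 2 * y) }

/-- For `v ≡ 0 (mod 12)` (v positive) and each `0 ≤ j ≤ (v-12)/4`,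
`D̄_j((v-12)²) + D_2(12) = D_{j+2}(v)`.  Here `D̄_j((v-12)²) = DbarJ ((v-12)/12) j`. -/
theorem stmt8 (v : ℕ) (hv : 0 < v) (h12 : v % 12 = 0) (j : ℕ) (hj : j ≤ (v - 12) / 4) :
    DbarJ ((v - 12) / 12) j + DJ 12 2 = DJ v (j + 2) := by
  obtain ⟨k, rfl⟩ : ∃ k, v = 12 * k := ⟨v / 12, by omega⟩
  have hk : 1 ≤ k := by omega
  have hh : (12 * k - 12) / 12 = k - 1 := by omega
  have hj' : j ≤ 3 * (k - 1) := by omega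
  rw [hh]
  set R := rbar (k - 1) j with hRdef
  have key : rD (12 * k) (j + 2) = R + 1 ∧ 4 * j + 3 * R ≤ 12 * (k - 1) := by
    rw [hRdef]; unfold rbar rD; split_ifs <;> omega
  obtain ⟨hK1, hK2⟩ := key
  have hrD2 : rD 12 2 = 1 := by decide
  ext ⟨a, b, c⟩
  simp only [Set.mem_add, DbarJ, DJ, Set.mem_setOf_eq]
  constructor
  · rintro ⟨p, ⟨y, hy, rfl⟩, q, ⟨z, hz, rfl⟩, hsum⟩
    rw [hrD2] at hz
    rw [Prod.mk_add_mk, Prod.mk_add_mk, Prod.mk.injEq, Prod.mk.injEq] at hsum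
    obtain ⟨h1, h2, h3⟩ := hsum
    refine ⟨y + z, by omega, ?_⟩
    rw [Prod.mk.injEq, Prod.mk.injEq]
    refine ⟨by omega, by omega, by omega⟩
  · rintro ⟨y', hy', hp⟩
    rw [Prod.mk.injEq, Prod.mk.injEq] at hp
    obtain ⟨rfl, rfl, rfl⟩ := hp
    rcases le_or_gt y' R with h | h
    · refine ⟨_, ⟨y', h, rfl⟩, _, ⟨0, by omega, rfl⟩, ?_⟩
      rw [Prod.mk_add_mk, Prod.mk_add_mk, Prod.mk.injEq, Prod.mk.injEq]
      refine ⟨by omega, by omega, by omega⟩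
    · refine ⟨_, ⟨R, le_refl R, rfl⟩, _, ⟨1, by omega, rfl⟩, ?_⟩
      rw [Prod.mk_add_mk, Prod.mk_add_mk, Prod.mk.injEq, Prod.mk.injEq]
      refine ⟨by omega, by omega, by omega⟩
end

section
/- For v ≡ 0 (mod 12) and each i ∈ {0,1}, D̄_0((v-12)^2) + D_i(12) = D_i(v), where D̄_0((v-12)^2) = { (v-12-3y, 0, 2y) : 0 ≤ y ≤ (v-12)/3 }, D_0(12) = { (11-3y, 0, 2y) : 0 ≤ y ≤ 3 }, D_1(12) = { (7-3y, 3, 2y) : 0 ≤ y ≤ 2 }, and D_i(v) = { (v-1-4i-3y, 3i, 2y) : 0 ≤ y ≤ r(v,i) } with r(v,0) = (v-3)/3 and r(v,1) = (v-6)/3. -/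
open Pointwise

/-- For `v ≡ 0 (mod 12)` (v positive) and each `i ∈ {0,1}`,
`D̄_0((v-12)²) + D_i(12) = D_i(v)`. -/
theorem stmt9 (v : ℕ) (hv : 0 < v) (h12 : v % 12 = 0) (i : ℕ) (hi : i ≤ 1) :
    DbarJ ((v - 12) / 12) 0 + DJ 12 i = DJ v i := by
  obtain ⟨k, rfl⟩ : ∃ k, v = 12 * k := ⟨v / 12, by omega⟩
  have hk : 1 ≤ k := by omega
  obtain ⟨h, rfl⟩ : ∃ h, k = h + 1 := ⟨k - 1, by omega⟩
  have hdiv : (12 * (h + 1) - 12) / 12 = h := by omega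
  rw [hdiv]
  interval_cases i
  · ext ⟨a, b, c⟩
    simp only [Set.mem_add, DbarJ, DJ, rbar, rD, Set.mem_setOf_eq, Prod.mk.injEq,
      Prod.exists]
    norm_num
    constructor
    · rintro ⟨x1, x2, x3, ⟨y1, hy1, e1, e2, e3⟩, z1, z2, z3, ⟨y2, hy2, f1, f2, f3⟩,
        g1, g2, g3⟩
      exact ⟨y1 + y2, by omega, by omega, by omega, by omega⟩
    · rintro ⟨y, hy, e1, e2, e3⟩
      refine ⟨12 * h - 3 * (y - min y 3), 0, 2 * (y - min y 3),
        ⟨y - min y 3, by omega, by omega, rfl, rfl⟩,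
        11 - 3 * min y 3, 0, 2 * min y 3, ⟨min y 3, by omega, by omega, rfl, rfl⟩,
        by omega, by omega, by omega⟩
  · ext ⟨a, b, c⟩
    simp only [Set.mem_add, DbarJ, DJ, rbar, rD, Set.mem_setOf_eq, Prod.mk.injEq,
      Prod.exists]
    norm_num
    constructor
    · rintro ⟨x1, x2, x3, ⟨y1, hy1, e1, e2, e3⟩, z1, z2, z3, ⟨y2, hy2, f1, f2, f3⟩,
        g1, g2, g3⟩
      exact ⟨y1 + y2, by omega, by omega, by omega, by omega⟩
    · rintro ⟨y, hy, e1, e2, e3⟩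
      refine ⟨12 * h - 3 * (y - min y 2), 0, 2 * (y - min y 2),
        ⟨y - min y 2, by omega, by omega, rfl, rfl⟩,
        7 - 3 * min y 2, 3, 2 * min y 2, ⟨min y 2, by omega, by omega, rfl, rfl⟩,
        by omega, by omega, by omega⟩
end

section
/- There exists a decomposition of the edge set of the complete bipartite-complement graph K_{6,6} (the complete bipartite graph with parts A = {1,...,6} and B = {a,...,f}) into 5 parallel classes: 2 perfect matchings and 3 classes each consisting of 4 vertex-disjoint paths P_3 covering all 12 vertices. -/
/-- The edges of a path given by the list of its vertices in order. -/
def pathEdges {V : Type*} [DecidableEq V] (l : List V) : Finset (Sym2 V) :=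
  ((l.zip l.tail).map (fun p : V × V => Sym2.mk p.1 p.2)).toFinset

/-- A parallel class of paths on `k` vertices in a graph `G`: a set of lists, each
a path on `k` vertices of `G`, which are vertex-disjoint and cover every vertex. -/
def IsPathClass {V : Type*} (G : SimpleGraph V) (k : ℕ) (C : Finset (List V)) : Prop :=
  (∀ l ∈ C, l.length = k ∧ l.Nodup ∧ l.Chain' G.Adj) ∧
  ∀ x : V, ∃! l : List V, l ∈ C ∧ x ∈ l

/-- All edges used by a class of paths. -/
def classEdges {V : Type*} [DecidableEq V] (C : Finset (List V)) : Finset (Sym2 V) :=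
  C.biUnion pathEdges

/-- A uniformly resolvable `(P₂,P₃,P₄)`-decomposition of `G` into `r` perfect matchings
(parallel classes of `P₂`), `s` parallel classes of `P₃` and `t` parallel classes of `P₄`:
pairwise edge-disjoint classes whose edges together are exactly the edges of `G`. -/
def IsURD {V : Type*} [DecidableEq V] (G : SimpleGraph V) (r s t : ℕ) : Prop :=
  ∃ F : Fin r ⊕ Fin s ⊕ Fin t → Finset (List V),
    (∀ i, IsPathClass G (Sum.elim (fun _ => 2) (Sum.elim (fun _ => 3) (fun _ => 4)) i) (F i)) ∧
    (∀ i j, i ≠ j → Disjoint (classEdges (F i)) (classEdges (F j))) ∧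
    (∀ e, e ∈ G.edgeSet ↔ ∃ i, e ∈ classEdges (F i))

/-- The complete bipartite graph `K_{6,6}`: vertices `(side, i)` with `side : Fin 2`,
adjacent iff on different sides. -/
def K66 : SimpleGraph (Fin 2 × Fin 6) := SimpleGraph.comap Prod.fst ⊤

instance K66.instDecidableRelAdj : DecidableRel K66.Adj :=
  fun u v => inferInstanceAs (Decidable (u.1 ≠ v.1))

theorem isPathClass_iff_card_filter {V : Type*} [DecidableEq V] {G : SimpleGraph V} {k : ℕ}
    {C : Finset (List V)} :
    IsPathClass G k C ↔ (∀ l ∈ C, l.length = k ∧ l.Nodup ∧ l.IsChain G.Adj) ∧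
      ∀ x, (C.filter (x ∈ ·)).card = 1 := by
  simp only [IsPathClass, Finset.card_eq_one, Finset.eq_singleton_iff_unique_mem,
    Finset.mem_filter, ExistsUnique]
  rfl

instance {V : Type*} [Fintype V] [DecidableEq V] {G : SimpleGraph V} [DecidableRel G.Adj]
    {k : ℕ} {C : Finset (List V)} : Decidable (IsPathClass G k C) :=
  decidable_of_iff _ isPathClass_iff_card_filter.symm

namespace K66

-- `(0, i)` is the vertex `i + 1` of `A = {1, …, 6}` and `(1, j)` the `j`-th letter of `B = {a, …, f}`
-- (counting from `0`); e.g. `[(1,0), (0,0), (1,1)]` is the path `[a, 1, b]`.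
def matchingClasses : Fin 2 → Finset (List (Fin 2 × Fin 6)) := ![
  {[(0,0), (1,4)], [(0,1), (1,5)], [(0,2), (1,2)], [(0,3), (1,3)], [(0,4), (1,1)], [(0,5), (1,0)]},
  {[(0,0), (1,3)], [(0,1), (1,1)], [(0,2), (1,0)], [(0,3), (1,4)], [(0,4), (1,5)], [(0,5), (1,2)]}]

def p3Classes : Fin 3 → Finset (List (Fin 2 × Fin 6)) := ![
  {[(1,0), (0,0), (1,1)], [(1,5), (0,3), (1,2)], [(0,2), (1,3), (0,4)], [(0,1), (1,4), (0,5)]},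
  {[(1,2), (0,1), (1,3)], [(1,0), (0,4), (1,4)], [(0,2), (1,1), (0,3)], [(0,0), (1,5), (0,5)]},
  {[(1,4), (0,2), (1,5)], [(1,1), (0,5), (1,3)], [(0,1), (1,0), (0,3)], [(0,0), (1,2), (0,4)]}]

def resolution : Fin 2 ⊕ Fin 3 ⊕ Fin 0 → Finset (List (Fin 2 × Fin 6)) :=
  Sum.elim matchingClasses (Sum.elim p3Classes Fin.elim0)

end K66

/-- `K_{6,6}` admits a uniformly resolvable decomposition into 5 parallel classes:
2 perfect matchings and 3 classes each consisting of 4 vertex-disjoint `P₃`'s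
covering all 12 vertices. -/
theorem stmt10 : IsURD K66 2 3 0 :=
  ⟨K66.resolution, by decide, by decide, by decide⟩
end

section
/- There exists a resolvable decomposition of the graph C_{5(6)} (the lexicographic blow-up of the 5-cycle by 6 independent vertices) into 9 parallel classes each consisting of 10 vertex-disjoint paths P_3 covering all 30 vertices. -/
/-- The graph `C_{5(6)}`: the lexicographic blow-up of a 5-cycle by 6 independent
vertices.  Vertices are `Z₆ × Z₅`, and `(i, a)` is adjacent to `(j, b)` iff `a` and `b`
are consecutive modulo 5. -/
def C56 : SimpleGraph (ZMod 6 × ZMod 5) where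
  Adj u v := u.2 = v.2 + 1 ∨ v.2 = u.2 + 1
  symm := ⟨fun u v h => h.symm⟩
  loopless := ⟨by intro u h; rcases h with h | h <;> simp at h <;> exact absurd h (by decide)⟩


/-! Following the paper, the nine classes are obtained by developing three families of five
base paths modulo 6: adding `i` and `i + 3` (for `i = 0, 1, 2`) to the first coordinate of a
family gives ten vertex-disjoint `P₃`'s covering `Z₆ × Z₅`. These nine classes are pairwise
edge-disjoint and each uses 20 edges, while `C_{5(6)}` is 12-regular on 30 vertices, so has
`9 · 20 = 180` edges; hence the classes exhaust the edges. -/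

theorem List.IsChain.rel_of_mem_zip_tail {α : Type*} {R : α → α → Prop} :
    ∀ {l : List α}, l.IsChain R → ∀ {a b : α}, (a, b) ∈ l.zip l.tail → R a b
  | [], _, _, _, hab => by simp at hab
  | [_], _, _, _, hab => by simp at hab
  | _ :: _ :: _, h, _, _, hab => by
    rw [List.isChain_cons_cons] at h
    rw [List.tail_cons, List.zip_cons_cons, List.mem_cons, Prod.mk.injEq] at hab
    rcases hab with ⟨rfl, rfl⟩ | hab
    · exact h.1
    · exact h.2.rel_of_mem_zip_tail hab

theorem SimpleGraph.IsRegularOfDegree.two_mul_card_edgeFinset {V : Type*} [Fintype V]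
    {G : SimpleGraph V} [DecidableRel G.Adj] {k : ℕ} (h : G.IsRegularOfDegree k) :
    2 * Finset.card G.edgeFinset = Fintype.card V * k := by
  rw [← G.sum_degrees_eq_twice_card_edges, Finset.sum_congr rfl fun v _ => h v]
  simp

open Function

section PathClasses

variable {V : Type*} {G : SimpleGraph V}

theorem isPathClass_of_forall_mem {k : ℕ} {C : Finset (List V)}
    (hpath : ∀ l ∈ C, l.length = k ∧ l.Nodup ∧ l.IsChain G.Adj)
    (hcover : ∀ x, ∃ l ∈ C, x ∈ l ∧ ∀ l' ∈ C, x ∈ l' → l' = l) :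
    IsPathClass G k C := by
  refine ⟨hpath, fun x => ?_⟩
  obtain ⟨l, hl, hx, huniq⟩ := hcover x
  exact ⟨l, ⟨hl, hx⟩, fun l' ⟨hl', hx'⟩ => huniq l' hl' hx'⟩

variable [DecidableEq V]

theorem coe_pathEdges_subset_edgeSet {l : List V} (h : l.IsChain G.Adj) :
    (pathEdges l : Set (Sym2 V)) ⊆ G.edgeSet := by
  intro e he
  simp only [pathEdges, Finset.mem_coe, List.mem_toFinset, List.mem_map] at he
  obtain ⟨⟨u, v⟩, huv, rfl⟩ := he
  exact h.rel_of_mem_zip_tail huv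

theorem IsPathClass.coe_classEdges_subset_edgeSet {k : ℕ} {C : Finset (List V)}
    (hC : IsPathClass G k C) : (classEdges C : Set (Sym2 V)) ⊆ G.edgeSet := by
  intro e he
  obtain ⟨l, hl, he⟩ := Finset.mem_biUnion.mp he
  exact coe_pathEdges_subset_edgeSet (hC.1 l hl).2.2 he

theorem isURD_of_isPathClass {ι : Type*} [Fintype ι] [Fintype G.edgeSet] {s : ℕ}
    (F : ι → Finset (List V)) (hs : Fintype.card ι = s) (hF : ∀ i, IsPathClass G 3 (F i))
    (hdisj : Pairwise (Disjoint on fun i => classEdges (F i)))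
    (hcard : Finset.card G.edgeFinset ≤ ∑ i, Finset.card (classEdges (F i))) :
    IsURD G 0 s 0 := by
  have hunion : Finset.univ.biUnion (fun i => classEdges (F i)) = G.edgeFinset := by
    refine Finset.eq_of_subset_of_card_le (fun e he => ?_) ?_
    · obtain ⟨i, -, he⟩ := Finset.mem_biUnion.mp he
      exact G.mem_edgeFinset.mpr ((hF i).coe_classEdges_subset_edgeSet he)
    · rwa [Finset.card_biUnion fun i _ j _ hij => hdisj hij]
  let e : ι ≃ Fin s := Fintype.equivFinOfCardEq hs
  refine ⟨Sum.elim Fin.elim0 (Sum.elim (fun k => F (e.symm k)) Fin.elim0), ?_, ?_, ?_⟩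
  · rintro (i | k | i)
    exacts [i.elim0, hF _, i.elim0]
  · rintro (i | a | i) (j | b | j) hab
    all_goals first | exact i.elim0 | exact j.elim0 | skip
    exact hdisj (e.symm.injective.ne fun h => hab (by rw [h]))
  · intro x
    rw [← SimpleGraph.mem_edgeFinset, ← hunion, Finset.mem_biUnion]
    constructor
    · rintro ⟨i, -, hi⟩
      exact ⟨Sum.inr (Sum.inl (e i)), by simpa using hi⟩
    · rintro ⟨i | k | i, hi⟩
      exacts [i.elim0, ⟨_, Finset.mem_univ _, hi⟩, i.elim0]

end PathClasses

instance : DecidableRel C56.Adj := fun u v =>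
  decidable_of_iff (u.2 = v.2 + 1 ∨ v.2 = u.2 + 1) Iff.rfl

theorem c56_isRegularOfDegree : C56.IsRegularOfDegree 12 := by
  have h : ∀ v, C56.degree v = 12 := by decide
  exact h

theorem card_edgeFinset_c56 : Finset.card C56.edgeFinset = 180 := by
  have h := c56_isRegularOfDegree.two_mul_card_edgeFinset
  simp only [Fintype.card_prod, ZMod.card] at h
  omega

/-- The paper's `B_0^{(j+1)}`, with `x_a` written `(x, a)`. -/
def baseBlocks : Fin 3 → List (List (ZMod 6 × ZMod 5)) :=
  ![[[(0,1),(0,0),(1,1)], [(2,2),(2,1),(3,2)], [(1,3),(1,2),(2,3)], [(2,4),(0,3),(3,4)],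
      [(1,0),(1,4),(2,0)]],
    [[(2,1),(0,0),(3,1)], [(3,2),(1,1),(4,2)], [(4,3),(2,2),(5,3)], [(4,4),(0,3),(5,4)],
      [(4,0),(0,4),(5,0)]],
    [[(4,1),(0,0),(5,1)], [(4,2),(0,1),(5,2)], [(4,3),(0,2),(5,3)], [(0,4),(0,3),(1,4)],
      [(4,0),(2,4),(5,0)]]]

def translatePath (i : ZMod 6) (l : List (ZMod 6 × ZMod 5)) : List (ZMod 6 × ZMod 5) :=
  l.map fun v => (v.1 + i, v.2)

/-- The class `B_i^{(j)} ∪ B_{i+3}^{(j)}`, indexed by `(j - 1, i)`. -/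
def developedClass (p : Fin 3 × Fin 3) : Finset (List (ZMod 6 × ZMod 5)) :=
  ((baseBlocks p.1).map (translatePath p.2) ++
    (baseBlocks p.1).map (translatePath (p.2 + 3))).toFinset

theorem isPathClass_developedClass (p : Fin 3 × Fin 3) : IsPathClass C56 3 (developedClass p) := by
  refine isPathClass_of_forall_mem ?_ ?_ <;> revert p <;> decide +kernel

theorem card_classEdges_developedClass (p : Fin 3 × Fin 3) :
    Finset.card (classEdges (developedClass p)) = 20 := by
  revert p
  decide +kernel

theorem disjoint_classEdges_developedClass :
    Pairwise (Disjoint on fun p => classEdges (developedClass p)) := by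
  have h : ∀ p q, p ≠ q →
      Disjoint (classEdges (developedClass p)) (classEdges (developedClass q)) := by
    decide +kernel
  exact h

/-- There is a resolvable decomposition of `C_{5(6)}` into 9 parallel classes, each
consisting of 10 vertex-disjoint paths `P₃` covering all 30 vertices. -/
theorem stmt13 : IsURD C56 0 9 0 :=
  isURD_of_isPathClass developedClass rfl isPathClass_developedClass
    disjoint_classEdges_developedClass
    (by simp [card_edgeFinset_c56, card_classEdges_developedClass])
end

section
/- For every h ≥ 1, the h-fold sumset h * D̄(12^2) equals D̄(12^{h+1}), where D̄(12^m) = ⋃_{j=0}^{3(m-1)} { (12(m-1) - 4j - 3y, 3j, 2y) : 0 ≤ y ≤ r̄(m-1, j) } and r̄(k,j) = 4k - 4j/3 if j ≡ 0 (mod 3), 4k - 2 - 4(j-1)/3 if j ≡ 1 (mod 3), 4k - 3 - 4(j-2)/3 if j ≡ 2 (mod 3). -/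
open Pointwise

def DbarM (m : ℕ) : Set (ℕ × ℕ × ℕ) :=
  ⋃ j ∈ Set.Iic (3 * (m - 1)),
    { p | ∃ y ≤ rbar (m - 1) j, p = (12 * (m - 1) - 4 * j - 3 * y, 3 * j, 2 * y) }

def Eset (h : ℕ) : Set (ℕ × ℕ × ℕ) :=
  {p | p.2.1 % 3 = 0 ∧ p.2.2 % 2 = 0 ∧ 6 * p.1 + 8 * p.2.1 + 9 * p.2.2 = 72 * h}

lemma charE (h : ℕ) : DbarM (h + 1) = Eset h := by
  ext ⟨x, b, c⟩
  simp only [DbarM, Eset, Set.mem_iUnion, Set.mem_setOf_eq, Set.mem_Iic, Prod.mk.injEq,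
    Nat.add_sub_cancel]
  constructor
  · rintro ⟨j, hj, y, hy, h1, h2, h3⟩
    unfold rbar at hy
    split_ifs at hy <;> omega
  · rintro ⟨hb, hc, he⟩
    refine ⟨b / 3, ?_, c / 2, ?_, ?_, ?_, ?_⟩ <;>
      [skip; (unfold rbar; split_ifs); skip; skip; skip] <;> omega

set_option synthInstance.maxSize 1000 in
set_option synthInstance.maxHeartbeats 1000000 in
set_option maxHeartbeats 1000000 in
lemma small : ∀ x < 12, ∀ j < 3, ∀ y < 4, x + 4 * j + 3 * y = 24 →
    ∃ a < 12, ∃ b < 3, ∃ c < 4, a ≤ x ∧ b ≤ j ∧ c ≤ y ∧ a + 4 * b + 3 * c = 12 := by decide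

lemma key_s18 (x j y m : ℕ) (he : x + 4 * j + 3 * y = 12 * (m + 2)) :
    ∃ a ≤ x, ∃ b ≤ j, ∃ c ≤ y, a + 4 * b + 3 * c = 12 := by
  rcases le_or_gt 12 x with hx | hx
  · exact ⟨12, hx, 0, Nat.zero_le _, 0, Nat.zero_le _, rfl⟩
  rcases le_or_gt 3 j with hj | hj
  · exact ⟨0, Nat.zero_le _, 3, hj, 0, Nat.zero_le _, rfl⟩
  rcases le_or_gt 4 y with hy | hy
  · exact ⟨0, Nat.zero_le _, 0, Nat.zero_le _, 4, hy, rfl⟩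
  obtain ⟨a, -, b1, -, c1, -, h1, h2, h3, h4⟩ := small x hx j hj y hy (by omega)
  exact ⟨a, h1, b1, h2, c1, h3, h4⟩

lemma stepE (h : ℕ) (hh : 1 ≤ h) : Eset h + Eset 1 = Eset (h + 1) := by
  ext ⟨x, b, c⟩
  constructor
  · rintro ⟨⟨x1, b1, c1⟩, h1, ⟨x2, b2, c2⟩, h2, hsum⟩
    obtain ⟨ha, hb, hc⟩ := h1
    obtain ⟨ha', hb', hc'⟩ := h2
    simp only [Prod.mk_add_mk, Prod.mk.injEq] at hsum
    simp only [Eset, Set.mem_setOf_eq] at *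
    omega
  · rintro ⟨hb, hc, he⟩
    simp only [Eset, Set.mem_setOf_eq] at hb hc he
    obtain ⟨m, hm⟩ := Nat.exists_eq_add_of_le hh
    have hsum : x + 4 * (b / 3) + 3 * (c / 2) = 12 * (m + 2) := by omega
    obtain ⟨a, ha, b1, hb1, c1, hc1, hd⟩ := key_s18 x (b / 3) (c / 2) m hsum
    refine ⟨(x - a, b - 3 * b1, c - 2 * c1), ⟨?_, ?_, ?_⟩,
      (a, 3 * b1, 2 * c1), ⟨?_, ?_, ?_⟩, ?_⟩ <;>
      simp only [Prod.mk_add_mk, Prod.mk.injEq] <;> omega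

/-- For every `h ≥ 1`, the `h`-fold sumset `h * D̄(12²)` equals `D̄(12^{h+1})`. -/
theorem stmt18 (h : ℕ) (hh : 1 ≤ h) : foldSum h (DbarM 2) = DbarM (h + 1) := by
  induction h with
  | zero => omega
  | succ n ih =>
    rcases Nat.eq_zero_or_pos n with rfl | hn
    · show foldSum 0 (DbarM 2) + DbarM 2 = DbarM 2
      show ({0} : Set (ℕ × ℕ × ℕ)) + DbarM 2 = DbarM 2
      rw [Set.singleton_zero, zero_add]
    · show foldSum n (DbarM 2) + DbarM 2 = DbarM (n + 2)
      rw [ih hn, charE, charE, charE]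
      exact stepE n hn
end

section
/- Let v ≡ 0 (mod 12). If K_v admits a uniformly resolvable decomposition into r perfect matchings, s parallel classes of P_3, and t parallel classes of P_4, then there exist non-negative integers x, y with s = 3x, t = 2y, r = v - 1 - 4x - 3y, 0 ≤ x ≤ (v-4)/4, and 0 ≤ y ≤ r(v,x), where r(v,x) = (v-3)/3 - 4x/3 if x ≡ 0 (mod 3), (v-6)/3 - 4(x-1)/3 if x ≡ 1 (mod 3), (v-9)/3 - 4(x-2)/3 if x ≡ 2 (mod 3). -/
/-!
Every parallel class of paths on `k` vertices covers the `v` vertices with `v / k` paths of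
`k - 1` edges each, so it uses `v (k - 1) / k` edges: `v/2`, `2v/3` and `3v/4` edges for
`k = 2, 3, 4`. Counting the `v (v - 1) / 2` edges of `K_v` over all classes gives
`6r + 8s + 9t = 6(v - 1)`. Reducing modulo `3` and `2` yields `s = 3x` and `t = 2y`, hence
`r = v - 1 - 4x - 3y`, and the bounds on `x` and `y` are `r ≥ 0` rewritten with `12 ∣ v`.
-/

open Finset

lemma mem_of_mem_pathEdges {V : Type*} [DecidableEq V] {l : List V} {e : Sym2 V}
    (he : e ∈ pathEdges l) {x : V} (hx : x ∈ e) : x ∈ l := by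
  simp only [pathEdges, List.mem_toFinset, List.mem_map] at he
  obtain ⟨⟨a, b⟩, hab, rfl⟩ := he
  obtain ⟨ha, hb⟩ := List.of_mem_zip hab
  rcases Sym2.mem_iff.mp hx with rfl | rfl
  · exact ha
  · exact List.mem_of_mem_tail hb

lemma card_pathEdges {V : Type*} [DecidableEq V] :
    ∀ {l : List V}, l.Nodup → #(pathEdges l) = l.length - 1
  | [], _ => by simp [pathEdges]
  | [_], _ => by simp [pathEdges]
  | a :: b :: l, hl => by
    have hcons : pathEdges (a :: b :: l) = insert s(a, b) (pathEdges (b :: l)) := by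
      simp [pathEdges]
    have hnew : s(a, b) ∉ pathEdges (b :: l) := fun hab =>
      (List.nodup_cons.mp hl).1 (mem_of_mem_pathEdges hab (Sym2.mem_mk_left a b))
    rw [hcons, card_insert_of_notMem hnew, card_pathEdges hl.of_cons]
    simp

namespace IsPathClass

variable {V : Type*} {G : SimpleGraph V} {k : ℕ} {C : Finset (List V)}

lemma eq_of_mem_of_mem (hC : IsPathClass G k C) {l l' : List V} (hl : l ∈ C) (hl' : l' ∈ C)
    {x : V} (hx : x ∈ l) (hx' : x ∈ l') : l = l' :=
  (hC.2 x).unique ⟨hl, hx⟩ ⟨hl', hx'⟩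

lemma card_mul [Fintype V] [DecidableEq V] (hC : IsPathClass G k C) :
    #C * k = Fintype.card V := by
  have hcover : (univ : Finset V) = C.biUnion List.toFinset := by
    ext x
    obtain ⟨l, ⟨hl, hx⟩, -⟩ := hC.2 x
    simpa using ⟨l, hl, hx⟩
  have hdisj : (C : Set (List V)).PairwiseDisjoint List.toFinset :=
    fun l hl l' hl' hne => disjoint_left.mpr fun x hx hx' =>
      hne (hC.eq_of_mem_of_mem hl hl' (List.mem_toFinset.mp hx) (List.mem_toFinset.mp hx'))
  rw [← card_univ, hcover, card_biUnion hdisj]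
  exact (sum_const_nat fun l hl => by
    rw [List.toFinset_card_of_nodup (hC.1 l hl).2.1, (hC.1 l hl).1]).symm

lemma card_classEdges [DecidableEq V] (hC : IsPathClass G k C) :
    #(classEdges C) = #C * (k - 1) := by
  have hdisj : (C : Set (List V)).PairwiseDisjoint pathEdges :=
    fun l hl l' hl' hne => disjoint_left.mpr fun e he he' =>
      hne (hC.eq_of_mem_of_mem hl hl' (mem_of_mem_pathEdges he (Sym2.out_fst_mem e))
        (mem_of_mem_pathEdges he' (Sym2.out_fst_mem e)))
  rw [classEdges, card_biUnion hdisj]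
  exact sum_const_nat fun l hl => by
    rw [card_pathEdges (hC.1 l hl).2.1, (hC.1 l hl).1]

lemma mul_card_classEdges [Fintype V] [DecidableEq V] (hC : IsPathClass G k C) :
    k * #(classEdges C) = Fintype.card V * (k - 1) := by
  rw [hC.card_classEdges, ← hC.card_mul]
  ring

end IsPathClass

lemma IsURD.twelve_mul_card_edgeFinset {V : Type*} [Fintype V] [DecidableEq V]
    {G : SimpleGraph V} [DecidableRel G.Adj] {r s t : ℕ} (h : IsURD G r s t) :
    12 * #G.edgeFinset = Fintype.card V * (6 * r + 8 * s + 9 * t) := by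
  obtain ⟨F, hF, hdisj, hcover⟩ := h
  have hedges : G.edgeFinset = univ.biUnion (fun i => classEdges (F i)) := by
    ext e
    simpa using hcover e
  have hclass : ∀ i, 12 * #(classEdges (F i)) =
      Fintype.card V * Sum.elim (fun _ => 6) (Sum.elim (fun _ => 8) (fun _ => 9)) i := by
    intro i
    have := (hF i).mul_card_classEdges
    rcases i with i | i | i <;> simp only [Sum.elim_inl, Sum.elim_inr] at this ⊢ <;> omega
  rw [hedges, card_biUnion fun i _ j _ hij => hdisj i j hij, mul_sum,
    sum_congr rfl fun i _ => hclass i, ← mul_sum, Fintype.sum_sum_type, Fintype.sum_sum_type]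
  simp only [Sum.elim_inl, Sum.elim_inr, sum_const, card_univ, Fintype.card_fin, smul_eq_mul]
  ring

lemma IsURD.edge_equation_top {v r s t : ℕ} (hv : 0 < v)
    (h : IsURD (⊤ : SimpleGraph (Fin v)) r s t) : 6 * r + 8 * s + 9 * t = 6 * (v - 1) := by
  have hcount := h.twelve_mul_card_edgeFinset
  rw [SimpleGraph.card_edgeFinset_top_eq_card_choose_two, Fintype.card_fin,
    Nat.choose_two_right] at hcount
  have htwice : v * (v - 1) / 2 * 2 = v * (v - 1) :=
    Nat.div_mul_cancel (Nat.even_mul_pred_self v).two_dvd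
  refine Nat.eq_of_mul_eq_mul_left hv ?_
  rw [← hcount]
  linear_combination 6 * htwice

/-- For `v ≡ 0 (mod 12)`: if `K_v` has a uniformly resolvable decomposition into `r`
perfect matchings, `s` classes of `P₃` and `t` classes of `P₄`, then `s = 3x`, `t = 2y`,
`r = v - 1 - 4x - 3y` with `0 ≤ x ≤ (v-4)/4` and `0 ≤ y ≤ r(v,x)`; that is,
`(r,s,t) ∈ D(v)`. -/
theorem stmt19 (v r s t : ℕ) (hv : 0 < v) (h12 : v % 12 = 0)
    (h : IsURD (⊤ : SimpleGraph (Fin v)) r s t) :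
    ∃ x y : ℕ, s = 3 * x ∧ t = 2 * y ∧ r = v - 1 - 4 * x - 3 * y ∧
      x ≤ (v - 4) / 4 ∧ y ≤ rD v x := by
  have hedges := h.edge_equation_top hv
  refine ⟨s / 3, t / 2, by omega, by omega, by omega, by omega, ?_⟩
  unfold rD
  split_ifs <;> omega
end
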